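/- arXiv:1206.6963 — 2 statements merged into one kernel-verified Lean document; each statement's English description precedes it below -/
import Mathlib

section
/- If a measurable function s : [1,∞) → ℂ is slowly oscillating with respect to logarithmic summability and the statistical limit st-lim_{x→∞} s(x) = ℓ exists, then the ordinary limit lim_{x→∞} s(x) = ℓ exists. -/
open Filter MeasureTheory Set

/-- `s` is slowly oscillating with respect to logarithmic summability `(L,1)`. -/
def SlowlyOscillatingL1 (s : ℝ → ℂ) : Prop :=
  (⨅ l ∈ Set.Ioi (1 : ℝ),
    Filter.limsup (fun x : ℝ =>
      sSup ((fun t : ℝ => ((‖s t - s x‖ : ℝ) : EReal)) '' Set.Ioc x (x ^ l)))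
      Filter.atTop) = 0

/-- Statistical limit of a complex-valued measurable function at `∞`. -/
def StatLimC (s : ℝ → ℂ) (ℓ : ℂ) : Prop :=
  ∀ ε : ℝ, 0 < ε →
    Tendsto (fun b : ℝ =>
        (volume {x : ℝ | x ∈ Ioo (1 : ℝ) b ∧ ε < ‖s x - ℓ‖}).toReal / (b - 1))
      atTop (nhds 0)

/- A statistical limit only controls `s` off a set of small density, while slow oscillation
propagates a single good value of `s` on `(x, x ^ l]` back to `x`; since `x ^ l ≥ 2x` for large `x`,
the interval `(x, 2x)` is too long to consist of bad points only, so such a good value exists. -/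

theorem eventually_mul_le_rpow {c l : ℝ} (hl : 1 < l) : ∀ᶠ x : ℝ in atTop, c * x ≤ x ^ l := by
  filter_upwards [(tendsto_rpow_atTop (sub_pos.2 hl)).eventually_ge_atTop c,
    eventually_ge_atTop 0] with x hc hx
  calc c * x ≤ x ^ (l - 1) * x := mul_le_mul_of_nonneg_right hc hx
    _ = x ^ l := by rw [← Real.rpow_add_one' hx (by linarith), sub_add_cancel]

theorem SlowlyOscillatingL1.exists_eventually_norm_sub_lt {s : ℝ → ℂ} (hs : SlowlyOscillatingL1 s)
    {ε : ℝ} (hε : 0 < ε) :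
    ∃ l > (1 : ℝ), ∀ᶠ x : ℝ in atTop, ∀ t ∈ Ioc x (x ^ l), ‖s t - s x‖ < ε := by
  have hlt : (⨅ l ∈ Ioi (1 : ℝ), limsup (fun x : ℝ =>
      sSup ((fun t : ℝ => ((‖s t - s x‖ : ℝ) : EReal)) '' Ioc x (x ^ l))) atTop) < (ε : EReal) := by
    rw [hs]
    exact EReal.coe_pos.2 hε
  obtain ⟨l, hlt⟩ := iInf_lt_iff.1 hlt
  obtain ⟨hl, hlt⟩ := iInf_lt_iff.1 hlt
  refine ⟨l, hl, ?_⟩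
  filter_upwards [eventually_lt_of_limsup_lt hlt] with x hx t ht
  exact_mod_cast (le_sSup (mem_image_of_mem _ ht)).trans_lt hx

theorem StatLimC.eventually_exists_norm_sub_le {s : ℝ → ℂ} {ℓ : ℂ} (hs : StatLimC s ℓ)
    {ε c : ℝ} (hε : 0 < ε) (hc : 1 < c) :
    ∀ᶠ x : ℝ in atTop, ∃ t ∈ Ioo x (c * x), ‖s t - ℓ‖ ≤ ε := by
  set bad : ℝ → Set ℝ := fun b => {x : ℝ | x ∈ Ioo (1 : ℝ) b ∧ ε < ‖s x - ℓ‖}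
  -- `(c - 1) / c` lies below the density `(c x - x) / (c x - 1)` of `(x, c x)` in `(1, c x)`.
  have hsmall : ∀ᶠ x : ℝ in atTop, (volume (bad (c * x))).toReal / (c * x - 1) < (c - 1) / c :=
    (tendsto_id.const_mul_atTop (by linarith)).eventually
      ((hs ε hε).eventually_lt_const (div_pos (by linarith) (by linarith)))
  filter_upwards [hsmall, eventually_gt_atTop 1] with x hsmall hx
  by_contra! hgood
  have hsub : Ioo x (c * x) ⊆ bad (c * x) := fun t ht =>
    ⟨⟨hx.trans ht.1, ht.2⟩, hgood t ht⟩
  have hvol : c * x - x ≤ (volume (bad (c * x))).toReal := by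
    have hfin : volume (bad (c * x)) ≠ ⊤ :=
      measure_ne_top_of_subset (fun t ht => ht.1) measure_Ioo_lt_top.ne
    have := ENNReal.toReal_mono hfin (measure_mono hsub)
    rwa [Real.volume_Ioo, ENNReal.toReal_ofReal (by nlinarith)] at this
  have hcx : 0 < c * x - 1 := by nlinarith
  rw [div_lt_div_iff₀ hcx (by linarith)] at hsmall
  nlinarith

theorem stmt11_general (s : ℝ → ℂ) (ℓ : ℂ)
    (hso : SlowlyOscillatingL1 s) (hst : StatLimC s ℓ) :
    Tendsto s atTop (nhds ℓ) := by
  rw [Metric.tendsto_nhds]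
  intro ε hε
  obtain ⟨l, hl, hosc⟩ := hso.exists_eventually_norm_sub_lt (half_pos hε)
  filter_upwards [hosc, hst.eventually_exists_norm_sub_le (half_pos hε) one_lt_two,
    eventually_mul_le_rpow (c := 2) hl] with x hosc ⟨t, ht, hgood⟩ hlong
  have hts : ‖s t - s x‖ < ε / 2 := hosc t ⟨ht.1, ht.2.le.trans hlong⟩
  calc dist (s x) ℓ ≤ ‖s t - s x‖ + ‖s t - ℓ‖ := by
        rw [dist_eq_norm, norm_sub_rev (s t)]; exact norm_sub_le_norm_sub_add_norm_sub _ _ _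
    _ < ε := by linarith

theorem stmt11 (s : ℝ → ℂ) (ℓ : ℂ) (hs : Measurable s)
    (hso : SlowlyOscillatingL1 s) (hst : StatLimC s ℓ) :
    Tendsto s atTop (nhds ℓ) :=
  stmt11_general s ℓ hso hst
end

section
/- (Main theorem, one-sided) If s : [1,∞) → ℝ is locally integrable, slowly decreasing with respect to logarithmic summability, and the statistical limit st-lim_{t→∞} τ(t) = ℓ of its logarithmic mean τ(t) := (1/log t)·∫₁ᵗ s(x)/x dx exists, then the ordinary limit lim_{x→∞} s(x) = ℓ exists. -/
/-!
Write `τ = logMean s` and `F t = ∫₁ᵗ s u / u = log t · τ t`. The statistical limit provides,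
for all large `x`, a point `t ∈ (x ^ p, x ^ q]` with `|τ t - ℓ| ≤ δ`: otherwise the exceptional
set would fill a fixed proportion of `(1, x ^ q)`. For two such points `a < b` from disjoint
windows, `F b - F a = ∫ₐᵇ s u / u` equals `ℓ · log (b / a)` up to `δ (log a + log b)`, which is
a bounded multiple of `δ · log (b / a)`. Slow decrease gives `s ≥ s x - ε` on
`[a, b] ⊆ [x, x ^ λ]`, hence `s x ≤ ℓ + 2ε`; choosing `a, b` in `[x ^ (1/λ), x]` instead gives
`s ≤ s x + ε` on `[a, b]`, hence `s x ≥ ℓ - 2ε`.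
-/

open Filter MeasureTheory Set intervalIntegral

/-- `s` is slowly decreasing with respect to logarithmic summability `(L,1)`. -/
def SlowlyDecreasingL1 (s : ℝ → ℝ) : Prop :=
  (0 : EReal) ≤ ⨆ l ∈ Set.Ioi (1 : ℝ),
    Filter.liminf (fun x : ℝ =>
      sInf ((fun t : ℝ => ((s t - s x : ℝ) : EReal)) '' Set.Ioc x (x ^ l))) Filter.atTop

/-- Statistical limit of a real-valued function at `∞`. -/
def StatLimR (s : ℝ → ℝ) (ℓ : ℝ) : Prop :=
  ∀ ε : ℝ, 0 < ε →
    Tendsto (fun b : ℝ =>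
        (volume {x : ℝ | x ∈ Ioo (1 : ℝ) b ∧ ε < |s x - ℓ|}).toReal / (b - 1))
      atTop (nhds 0)

noncomputable def logMean (s : ℝ → ℝ) (t : ℝ) : ℝ :=
  (Real.log t)⁻¹ * ∫ x in (1 : ℝ)..t, s x / x

theorem StatLimR.eventually_exists_Ioo {f : ℝ → ℝ} {ℓ δ c : ℝ} (hf : StatLimR f ℓ)
    (hδ : 0 < δ) (hc₀ : 0 < c) (hc₁ : c < 1) :
    ∀ᶠ y in atTop, ∃ t ∈ Ioo (c * y) y, |f t - ℓ| ≤ δ := by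
  filter_upwards [(hf δ hδ).eventually_lt_const (sub_pos.2 hc₁), eventually_gt_atTop 1,
    eventually_ge_atTop c⁻¹] with y hratio hy1 hyc
  by_contra! hbad
  set S := {t : ℝ | t ∈ Ioo (1 : ℝ) y ∧ δ < |f t - ℓ|}
  have hwindow : Ioo (c * y) y ⊆ S := fun t ht =>
    ⟨⟨lt_of_le_of_lt (by rwa [← inv_mul_le_iff₀ hc₀, mul_one]) ht.1, ht.2⟩, hbad t ht⟩
  have hvol : (1 - c) * y ≤ volume.real S := by
    calc (1 - c) * y = volume.real (Ioo (c * y) y) := by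
          rw [Real.volume_real_Ioo_of_le (by nlinarith)]; ring
      _ ≤ volume.real S := measureReal_mono hwindow
          ((measure_mono fun t ht => ht.1).trans_lt measure_Ioo_lt_top).ne
  have : 1 - c ≤ volume.real S / (y - 1) := by
    rw [le_div_iff₀ (by linarith)]; nlinarith
  exact (hratio.trans_le this).false

theorem StatLimR.eventually_exists_rpow_window {f : ℝ → ℝ} {ℓ δ p q : ℝ} (hf : StatLimR f ℓ)
    (hδ : 0 < δ) (hq : 0 < q) (hpq : p < q) :
    ∀ᶠ x in atTop, ∃ t ∈ Ioc (x ^ p) (x ^ q), |f t - ℓ| ≤ δ := by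
  have hsmall : ∀ᶠ x : ℝ in atTop, x ^ (p - q) ≤ 2⁻¹ := by
    have := tendsto_rpow_neg_atTop (sub_pos.2 hpq)
    rw [neg_sub] at this
    exact this.eventually_le_const (by norm_num)
  filter_upwards [(tendsto_rpow_atTop hq).eventually
    (hf.eventually_exists_Ioo hδ (inv_pos.2 two_pos) (by norm_num)), hsmall,
    eventually_gt_atTop 0] with x ⟨t, ht, hft⟩ hx hx0
  have : x ^ p ≤ 2⁻¹ * x ^ q := by
    rw [show p = (p - q) + q by ring, Real.rpow_add hx0]
    exact mul_le_mul_of_nonneg_right hx (by positivity)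
  exact ⟨t, ⟨this.trans_lt ht.1, ht.2.le⟩, hft⟩

theorem SlowlyDecreasingL1.exists_forall_sub_le {s : ℝ → ℝ} (hsd : SlowlyDecreasingL1 s)
    {ε : ℝ} (hε : 0 < ε) :
    ∃ l : ℝ, 1 < l ∧ ∀ᶠ x in atTop, ∀ t ∈ Icc x (x ^ l), s x - ε ≤ s t := by
  have hneg : ((-ε : ℝ) : EReal) < 0 := by exact_mod_cast neg_neg_of_pos hε
  obtain ⟨l, hl⟩ := lt_iSup_iff.1 (hneg.trans_le hsd)
  obtain ⟨hl1, hliminf⟩ := lt_iSup_iff.1 hl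
  refine ⟨l, hl1, ?_⟩
  filter_upwards [eventually_lt_of_lt_liminf hliminf] with x hx t ht
  rcases ht.1.eq_or_lt with rfl | hxt
  · linarith
  · have : ((-ε : ℝ) : EReal) < ((s t - s x : ℝ) : EReal) :=
      hx.trans_le (sInf_le ⟨t, ⟨hxt, ht.2⟩, rfl⟩)
    linarith [EReal.coe_lt_coe_iff.1 this]

section LogMean

variable {s : ℝ → ℝ}

theorem MeasureTheory.LocallyIntegrableOn.intervalIntegrable_div_id
    (hs : LocallyIntegrableOn s (Ici 1)) {a b : ℝ} (ha : 1 ≤ a) (hb : 1 ≤ b) :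
    IntervalIntegrable (fun u => s u / u) volume a b := by
  have hsub : uIcc a b ⊆ Ici 1 := fun u hu => (le_min ha hb).trans hu.1
  have hpos : ∀ u ∈ uIcc a b, u ≠ 0 := fun u hu => (zero_lt_one.trans_le (hsub hu)).ne'
  simpa only [div_eq_mul_inv] using
    ((hs.integrableOn_compact_subset hsub isCompact_uIcc).mul_continuousOn
      (continuousOn_inv₀.mono hpos) isCompact_uIcc).intervalIntegrable

theorem log_mul_logMean {t : ℝ} (ht : 1 < t) :
    Real.log t * logMean s t = ∫ x in (1 : ℝ)..t, s x / x :=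
  mul_inv_cancel_left₀ (Real.log_pos ht).ne' _

theorem integral_div_id_eq_sub (hs : LocallyIntegrableOn s (Ici 1)) {a b : ℝ} (ha : 1 < a)
    (hb : 1 < b) :
    ∫ u in a..b, s u / u = Real.log b * logMean s b - Real.log a * logMean s a := by
  rw [log_mul_logMean ha, log_mul_logMean hb, integral_interval_sub_left
    (hs.intervalIntegrable_div_id le_rfl hb.le) (hs.intervalIntegrable_div_id le_rfl ha.le)]

theorem logMean_neg (t : ℝ) : logMean (fun x => -s x) t = -logMean s t := by
  simp only [logMean, neg_div, intervalIntegral.integral_neg, mul_neg]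

theorem mul_log_sub_le_integral_div_id {a b m : ℝ}
    (hs : IntervalIntegrable (fun u => s u / u) volume a b) (ha : 0 < a) (hab : a ≤ b)
    (hm : ∀ t ∈ Icc a b, m ≤ s t) :
    m * (Real.log b - Real.log a) ≤ ∫ u in a..b, s u / u := by
  have hb : 0 < b := ha.trans_le hab
  have hconst : ∫ u in a..b, m / u = m * (Real.log b - Real.log a) := by
    simp only [div_eq_mul_inv, intervalIntegral.integral_const_mul]
    rw [integral_inv_of_pos ha hb, Real.log_div hb.ne' ha.ne']
  rw [← hconst]
  refine integral_mono_on hab ?_ hs fun t ht => ?_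
  · exact (continuousOn_const.div continuousOn_id fun u hu =>
      (ha.trans_le (uIcc_of_le hab ▸ hu).1).ne').intervalIntegrable
  · exact div_le_div_of_nonneg_right (hm t ht) (ha.trans_le ht.1).le

theorem sub_mul_log_sub_le_of_le_on (hs : LocallyIntegrableOn s (Ici 1)) {a b ℓ δ m : ℝ}
    (ha : 1 < a) (hab : a ≤ b) (hτa : |logMean s a - ℓ| ≤ δ) (hτb : |logMean s b - ℓ| ≤ δ)
    (hm : ∀ t ∈ Icc a b, m ≤ s t) :
    (m - ℓ) * (Real.log b - Real.log a) ≤ δ * (Real.log a + Real.log b) := by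
  have hb := ha.trans_le hab
  have hint := mul_log_sub_le_integral_div_id (hs.intervalIntegrable_div_id ha.le hb.le)
    (zero_lt_one.trans ha) hab hm
  rw [integral_div_id_eq_sub hs ha hb] at hint
  have hτb' : Real.log b * logMean s b ≤ Real.log b * (ℓ + δ) :=
    mul_le_mul_of_nonneg_left (by linarith [(abs_le.1 hτb).2]) (Real.log_pos hb).le
  have hτa' : Real.log a * (ℓ - δ) ≤ Real.log a * logMean s a :=
    mul_le_mul_of_nonneg_left (by linarith [(abs_le.1 hτa).1]) (Real.log_pos ha).le
  linarith

end LogMean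

section Window

variable {s : ℝ → ℝ} {x a b p q q' r ℓ δ : ℝ}

theorem le_add_of_le_on_window (hs : LocallyIntegrableOn s (Ici 1)) (hx : 1 < x) (hp : 0 ≤ p)
    (hqq' : q < q') (ha : a ∈ Ioc (x ^ p) (x ^ q)) (hb : b ∈ Ioc (x ^ q') (x ^ r))
    (hτa : |logMean s a - ℓ| ≤ δ) (hτb : |logMean s b - ℓ| ≤ δ) {m : ℝ}
    (hm : ∀ t ∈ Icc a b, m ≤ s t) :
    m ≤ ℓ + 2 * r * δ / (q' - q) := by
  have hx0 : 0 < x := zero_lt_one.trans hx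
  have hL : 0 < Real.log x := Real.log_pos hx
  have ha1 : 1 < a := (Real.one_le_rpow hx.le hp).trans_lt ha.1
  have hab : a < b := ha.2.trans_lt ((Real.rpow_lt_rpow_of_exponent_lt hx hqq').trans hb.1)
  have hlog_a : Real.log a ≤ q * Real.log x := by
    rw [← Real.log_rpow hx0]; exact Real.log_le_log (by linarith) ha.2
  have hlog_b : q' * Real.log x < Real.log b := by
    rw [← Real.log_rpow hx0]; exact Real.log_lt_log (by positivity) hb.1
  have hlog_b' : Real.log b ≤ r * Real.log x := by
    rw [← Real.log_rpow hx0]; exact Real.log_le_log (by linarith) hb.2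
  have hr : 0 < r := by nlinarith [Real.log_pos (ha1.trans hab)]
  have hδ : 0 ≤ δ := (abs_nonneg _).trans hτa
  have hgap : (q' - q) * Real.log x ≤ Real.log b - Real.log a := by linarith
  have hgap0 : 0 < Real.log b - Real.log a := (mul_pos (sub_pos.2 hqq') hL).trans_le hgap
  have key := sub_mul_log_sub_le_of_le_on hs ha1 hab.le hτa hτb hm
  have hsum :
      δ * (Real.log a + Real.log b) ≤ 2 * r * δ / (q' - q) * (Real.log b - Real.log a) := by
    calc δ * (Real.log a + Real.log b) ≤ 2 * r * δ * Real.log x := by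
          nlinarith [Real.log_pos ha1]
      _ = 2 * r * δ / (q' - q) * ((q' - q) * Real.log x) := by
          field_simp [(sub_pos.2 hqq').ne']
      _ ≤ 2 * r * δ / (q' - q) * (Real.log b - Real.log a) := by
          gcongr
  linarith [le_of_mul_le_mul_right (key.trans hsum) hgap0]

theorem sub_le_of_le_on_window (hs : LocallyIntegrableOn s (Ici 1)) (hx : 1 < x) (hp : 0 ≤ p)
    (hqq' : q < q') (ha : a ∈ Ioc (x ^ p) (x ^ q)) (hb : b ∈ Ioc (x ^ q') (x ^ r))
    (hτa : |logMean s a - ℓ| ≤ δ) (hτb : |logMean s b - ℓ| ≤ δ) {M : ℝ}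
    (hM : ∀ t ∈ Icc a b, s t ≤ M) :
    ℓ - 2 * r * δ / (q' - q) ≤ M := by
  have := le_add_of_le_on_window (s := fun x => -s x) (ℓ := -ℓ) (δ := δ) (m := -M)
    hs.neg hx hp hqq' ha hb (by rwa [logMean_neg, neg_sub_neg, abs_sub_comm])
    (by rwa [logMean_neg, neg_sub_neg, abs_sub_comm]) fun t ht => neg_le_neg (hM t ht)
  linarith

end Window

section Tauberian

variable {s : ℝ → ℝ} {ℓ ε : ℝ}

theorem eventually_le_add_of_statLimR_logMean (hs : LocallyIntegrableOn s (Ici 1))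
    (hsd : SlowlyDecreasingL1 s) (hst : StatLimR (logMean s) ℓ) (hε : 0 < ε) :
    ∀ᶠ x in atTop, s x ≤ ℓ + ε := by
  obtain ⟨l, hl, hdec⟩ := hsd.exists_forall_sub_le (half_pos hε)
  obtain ⟨q, h1q, hql⟩ := exists_between hl
  obtain ⟨q', hqq', hq'l⟩ := exists_between hql
  set δ := ε / 2 * (q' - q) / (2 * l)
  have hδ : 0 < δ := by have := sub_pos.2 hqq'; positivity
  have hwidth : 2 * l * δ / (q' - q) = ε / 2 := by
    simp only [δ]; field_simp [(sub_pos.2 hqq').ne']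
  filter_upwards [eventually_gt_atTop 1, hdec,
    hst.eventually_exists_rpow_window hδ (by linarith) h1q,
    hst.eventually_exists_rpow_window hδ (by linarith) hq'l]
    with x hx hdecx ⟨a, ha, hτa⟩ ⟨b, hb, hτb⟩
  have hxa : x < a := by simpa using ha.1
  have := le_add_of_le_on_window hs hx zero_le_one hqq' ha hb hτa hτb
    fun t ht => hdecx t ⟨hxa.le.trans ht.1, ht.2.trans hb.2⟩
  linarith

theorem eventually_sub_le_of_statLimR_logMean (hs : LocallyIntegrableOn s (Ici 1))
    (hsd : SlowlyDecreasingL1 s) (hst : StatLimR (logMean s) ℓ) (hε : 0 < ε) :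
    ∀ᶠ x in atTop, ℓ - ε ≤ s x := by
  obtain ⟨l, hl, hdec⟩ := hsd.exists_forall_sub_le (half_pos hε)
  obtain ⟨X, hX⟩ := eventually_atTop.1 hdec
  have hl0 : 0 < l := zero_lt_one.trans hl
  obtain ⟨q, hlq, hq1⟩ := exists_between (inv_lt_one_of_one_lt₀ hl)
  obtain ⟨q', hqq', hq'1⟩ := exists_between hq1
  set δ := ε / 2 * (q' - q) / 2
  have hδ : 0 < δ := by have := sub_pos.2 hqq'; positivity
  have hwidth : 2 * 1 * δ / (q' - q) = ε / 2 := by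
    simp only [δ]; field_simp [(sub_pos.2 hqq').ne']
  filter_upwards [eventually_gt_atTop 1,
    (tendsto_rpow_atTop (inv_pos.2 hl0)).eventually_ge_atTop X,
    hst.eventually_exists_rpow_window hδ (by linarith [inv_pos.2 hl0]) hlq,
    hst.eventually_exists_rpow_window hδ (by linarith) hq'1]
    with x hx hxX ⟨a, ha, hτa⟩ ⟨b, hb, hτb⟩
  have hbx : b ≤ x := by simpa using hb.2
  have := sub_le_of_le_on_window (M := s x + ε / 2) hs hx (inv_pos.2 hl0).le hqq' ha hb hτa hτb
    fun t ht => ?_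
  · linarith
  · have htl : x ≤ t ^ l := by
      calc x = (x ^ l⁻¹) ^ l := (Real.rpow_inv_rpow (by linarith) hl0.ne').symm
        _ ≤ t ^ l := by gcongr; exact ha.1.le.trans ht.1
    linarith [hX t (hxX.trans (ha.1.le.trans ht.1)) x ⟨ht.2.trans hbx, htl⟩]

end Tauberian

theorem stmt17 (s : ℝ → ℝ) (ℓ : ℝ)
    (hs : LocallyIntegrableOn s (Ici (1 : ℝ)))
    (hsd : SlowlyDecreasingL1 s)
    (hst : StatLimR (fun t : ℝ => (Real.log t)⁻¹ * ∫ x in (1 : ℝ)..t, s x / x) ℓ) :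
    Tendsto s atTop (nhds ℓ) := by
  change StatLimR (logMean s) ℓ at hst
  refine tendsto_order.2 ⟨fun m hm => ?_, fun M hM => ?_⟩
  · filter_upwards [eventually_sub_le_of_statLimR_logMean hs hsd hst (half_pos (sub_pos.2 hm))]
      with x hx
    linarith
  · filter_upwards [eventually_le_add_of_statLimR_logMean hs hsd hst (half_pos (sub_pos.2 hM))]
      with x hx
    linarith
end
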